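/- arXiv:2602.03582 — 3 statements merged into one kernel-verified Lean document; each statement's English description precedes it below -/
import Mathlib

section
/- Let B = γI + UΓUᵀ with γ > 0, U ∈ R^{d×m}, Γ ∈ R^{m×m} symmetric, and let s, y ∈ R^d with yᵀs ≠ 0. Define ρ = 1/(yᵀs), V = I − ρ s yᵀ, p = Γ Uᵀ s, τ = sᵀUΓUᵀs, δ = τ + γ sᵀs. Then Vᵀ B V + ρ y yᵀ = γ I + U⁺ Γ⁺ (U⁺)ᵀ, where U⁺ = [U, s, y] ∈ R^{d×(m+2)} and Γ⁺ is the (m+2)×(m+2) block matrix with blocks: Γ⁺[1:m,1:m] = Γ, Γ⁺[1:m, m+2] = Γ⁺[m+2, 1:m]ᵀ = −ρ p, Γ⁺[m+1, m+2] = Γ⁺[m+2, m+1] = −γρ, Γ⁺[m+2, m+2] = ρ(1 + ρδ), and Γ⁺[1:m, m+1] = 0, Γ⁺[m+1, m+1] = 0. -/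
/-!
Expanding `V = 1 - ρ s yᵀ` turns `Vᵀ (γ I + A) V + ρ y yᵀ`, for symmetric `A = U Γ Uᵀ`, into
`γ I + A` plus rank-one terms built from `s`, `y` and `A s = U p`. Multiplying out the block
matrix `U⁺ Γ⁺ U⁺ᵀ` produces `U Γ Uᵀ` plus exactly the same rank-one terms: the block `X` contributes
the cross terms in `U p` and `y`, and the `2 × 2` block `Y` the terms in `s` and `y`.
-/

open Matrix

namespace Matrix

variable {R : Type*} [CommRing R] {l o n k m₁ m₂ : Type*}
  [Fintype n] [Fintype k] [Fintype m₁] [Fintype m₂]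

theorem IsSymm.mul_mul_transpose {B : Matrix n n R} (hB : B.IsSymm) (A : Matrix l n R) :
    (A * B * Aᵀ).IsSymm := by
  rw [IsSymm, transpose_mul, transpose_mul, transpose_transpose, hB.eq, Matrix.mul_assoc]

theorem transpose_mul_mul_one_sub_vecMulVec [DecidableEq n] (M : Matrix n n R) (ρ : R)
    (s y : n → R) :
    (1 - ρ • vecMulVec s y)ᵀ * M * (1 - ρ • vecMulVec s y)
      = M - ρ • vecMulVec y (s ᵥ* M) - ρ • vecMulVec (M *ᵥ s) y
        + (ρ ^ 2 * (s ⬝ᵥ M *ᵥ s)) • vecMulVec y y := by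
  simp only [transpose_sub, transpose_smul, transpose_one, transpose_vecMulVec, Matrix.sub_mul,
    Matrix.mul_sub, Matrix.one_mul, Matrix.mul_one, Matrix.smul_mul, Matrix.mul_smul,
    vecMulVec_mul, mul_vecMulVec, sub_mulVec, smul_mulVec, vecMulVec_mulVec, op_smul_eq_smul,
    sub_vecMulVec, smul_vecMulVec, dotProduct_mulVec, smul_smul]
  module

theorem transpose_mul_smul_one_add_mul_one_sub_vecMulVec [DecidableEq n] {A : Matrix n n R}
    (hA : A.IsSymm) (γ ρ : R) (s y : n → R) :
    (1 - ρ • vecMulVec s y)ᵀ * (γ • 1 + A) * (1 - ρ • vecMulVec s y) + ρ • vecMulVec y y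
      = γ • 1 + A - ρ • (vecMulVec y (A *ᵥ s) + vecMulVec (A *ᵥ s) y)
        - (γ * ρ) • (vecMulVec y s + vecMulVec s y)
        + (ρ * (1 + ρ * (s ⬝ᵥ A *ᵥ s + γ * (s ⬝ᵥ s)))) • vecMulVec y y := by
  have hsA : s ᵥ* A = A *ᵥ s := by rw [← vecMul_transpose, hA.eq]
  rw [transpose_mul_mul_one_sub_vecMulVec]
  simp only [vecMul_add, add_mulVec, vecMul_smul, smul_mulVec, vecMul_one, one_mulVec, hsA,
    vecMulVec_add, add_vecMulVec, vecMulVec_smul, smul_vecMulVec, dotProduct_add, dotProduct_smul,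
    smul_eq_mul]
  module

theorem fromCols_mul_fromBlocks_mul_transpose_fromCols (A₁ : Matrix l m₁ R)
    (A₂ : Matrix l m₂ R) (B₁₁ : Matrix m₁ m₁ R) (B₁₂ : Matrix m₁ m₂ R) (B₂₁ : Matrix m₂ m₁ R)
    (B₂₂ : Matrix m₂ m₂ R) :
    fromCols A₁ A₂ * fromBlocks B₁₁ B₁₂ B₂₁ B₂₂ * (fromCols A₁ A₂)ᵀ
      = A₁ * B₁₁ * A₁ᵀ + A₁ * B₁₂ * A₂ᵀ + A₂ * B₂₁ * A₁ᵀ + A₂ * B₂₂ * A₂ᵀ := by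
  rw [transpose_fromCols, fromCols_mul_fromBlocks, fromCols_mul_fromRows, Matrix.add_mul,
    Matrix.add_mul]
  abel

theorem mul_vecMulVec_mul_transpose (A : Matrix l n R) (x : n → R) (y : k → R)
    (B : Matrix o k R) : A * vecMulVec x y * Bᵀ = vecMulVec (A *ᵥ x) (B *ᵥ y) := by
  rw [mul_vecMulVec, vecMulVec_mul, vecMul_transpose]

theorem mul_mul_transpose_eq_sum_vecMulVec (A : Matrix l n R) (M : Matrix n k R)
    (B : Matrix o k R) : A * M * Bᵀ = ∑ i, ∑ j, M i j • vecMulVec (A.col i) (B.col j) := by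
  ext a b
  simp only [mul_apply, sum_apply, smul_apply, vecMulVec_apply, transpose_apply, col_apply,
    smul_eq_mul, Finset.sum_mul]
  rw [Finset.sum_comm]
  exact Finset.sum_congr rfl fun i _ => Finset.sum_congr rfl fun j _ => by ring

theorem mul_of_fin_two_mul_transpose (W : Matrix l (Fin 2) R) (a b c d : R) :
    W * !![a, b; c, d] * Wᵀ
      = a • vecMulVec (W.col 0) (W.col 0) + b • vecMulVec (W.col 0) (W.col 1)
        + c • vecMulVec (W.col 1) (W.col 0) + d • vecMulVec (W.col 1) (W.col 1) := by
  rw [mul_mul_transpose_eq_sum_vecMulVec]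
  simp only [Fin.sum_univ_two, of_apply, cons_val_zero, cons_val_one]
  abel

end Matrix

theorem dfp_compact_inductive_step_general
    {d m : ℕ} (γ : ℝ)
    (U : Matrix (Fin d) (Fin m) ℝ) (Γ : Matrix (Fin m) (Fin m) ℝ) (hΓ : Γ.IsSymm)
    (B : Matrix (Fin d) (Fin d) ℝ) (hB : B = γ • 1 + U * Γ * Uᵀ)
    (s y : Fin d → ℝ)
    (ρ : ℝ)
    (V : Matrix (Fin d) (Fin d) ℝ) (hV : V = 1 - ρ • vecMulVec s y)
    (p : Fin m → ℝ) (hp : p = Γ *ᵥ (Uᵀ *ᵥ s))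
    (τ : ℝ) (hτ : τ = s ⬝ᵥ (U *ᵥ (Γ *ᵥ (Uᵀ *ᵥ s))))
    (δ : ℝ) (hδ : δ = τ + γ * (s ⬝ᵥ s))
    (W : Matrix (Fin d) (Fin 2) ℝ)
    (hW : W = Matrix.of fun i j => if j = 0 then s i else y i)
    (Uplus : Matrix (Fin d) (Fin m ⊕ Fin 2) ℝ) (hUplus : Uplus = fromCols U W)
    (X : Matrix (Fin m) (Fin 2) ℝ)
    (hX : X = Matrix.of fun i j => if j = 0 then 0 else -ρ * p i)
    (Y : Matrix (Fin 2) (Fin 2) ℝ)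
    (hY : Y = !![0, -γ * ρ; -γ * ρ, ρ * (1 + ρ * δ)])
    (Γplus : Matrix (Fin m ⊕ Fin 2) (Fin m ⊕ Fin 2) ℝ)
    (hΓplus : Γplus = fromBlocks Γ X Xᵀ Y) :
    Vᵀ * B * V + ρ • vecMulVec y y
      = γ • 1 + Uplus * Γplus * Uplusᵀ := by
  have hA : (U * Γ * Uᵀ).IsSymm := hΓ.mul_mul_transpose U
  have hAs : (U * Γ * Uᵀ) *ᵥ s = U *ᵥ p := by rw [hp, mulVec_mulVec, mulVec_mulVec]
  have hδ' : s ⬝ᵥ U *ᵥ p + γ * (s ⬝ᵥ s) = δ := by rw [hδ, hτ, hp]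
  have hX' : X = vecMulVec (-ρ • p) (Pi.single 1 1) := by
    ext i j; fin_cases j <;> simp [hX, vecMulVec_apply]
  have hWs : W.col 0 = s := by ext; simp [hW]
  have hWy : W.col 1 = y := by ext; simp [hW]
  rw [hB, hV, transpose_mul_smul_one_add_mul_one_sub_vecMulVec hA, hAs, hδ']
  rw [hUplus, hΓplus, fromCols_mul_fromBlocks_mul_transpose_fromCols, hX', transpose_vecMulVec,
    mul_vecMulVec_mul_transpose, mul_vecMulVec_mul_transpose, mulVec_single_one, hY,
    mul_of_fin_two_mul_transpose, hWs, hWy]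
  simp only [mulVec_smul, vecMulVec_smul, smul_vecMulVec]
  module

/-- inductive step of the compact representation: for
`B = γ I + U Γ Uᵀ`, the DFP update `Vᵀ B V + ρ y yᵀ` equals
`γ I + U⁺ Γ⁺ (U⁺)ᵀ` where `U⁺ = [U, s, y]` and `Γ⁺` is the explicit block matrix
with blocks `Γ`, `0`, `−ρ p`, `−γρ`, and `ρ(1+ρδ)`. -/
theorem dfp_compact_inductive_step
    {d m : ℕ} (γ : ℝ) (hγ : 0 < γ)
    (U : Matrix (Fin d) (Fin m) ℝ) (Γ : Matrix (Fin m) (Fin m) ℝ) (hΓ : Γ.IsSymm)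
    (B : Matrix (Fin d) (Fin d) ℝ) (hB : B = γ • 1 + U * Γ * Uᵀ)
    (s y : Fin d → ℝ) (hys : y ⬝ᵥ s ≠ 0)
    (ρ : ℝ) (hρ : ρ = (y ⬝ᵥ s)⁻¹)
    (V : Matrix (Fin d) (Fin d) ℝ) (hV : V = 1 - ρ • vecMulVec s y)
    (p : Fin m → ℝ) (hp : p = Γ *ᵥ (Uᵀ *ᵥ s))
    (τ : ℝ) (hτ : τ = s ⬝ᵥ (U *ᵥ (Γ *ᵥ (Uᵀ *ᵥ s))))
    (δ : ℝ) (hδ : δ = τ + γ * (s ⬝ᵥ s))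
    (W : Matrix (Fin d) (Fin 2) ℝ)
    (hW : W = Matrix.of fun i j => if j = 0 then s i else y i)
    (Uplus : Matrix (Fin d) (Fin m ⊕ Fin 2) ℝ) (hUplus : Uplus = fromCols U W)
    (X : Matrix (Fin m) (Fin 2) ℝ)
    (hX : X = Matrix.of fun i j => if j = 0 then 0 else -ρ * p i)
    (Y : Matrix (Fin 2) (Fin 2) ℝ)
    (hY : Y = !![0, -γ * ρ; -γ * ρ, ρ * (1 + ρ * δ)])
    (Γplus : Matrix (Fin m ⊕ Fin 2) (Fin m ⊕ Fin 2) ℝ)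
    (hΓplus : Γplus = fromBlocks Γ X Xᵀ Y) :
    Vᵀ * B * V + ρ • vecMulVec y y
      = γ • 1 + Uplus * Γplus * Uplusᵀ :=
  dfp_compact_inductive_step_general γ U Γ hΓ B hB s y ρ V hV p hp τ hτ δ hδ W hW Uplus hUplus X hX
    Y hY Γplus hΓplus
end

section
/- Let γ > 0, Q ∈ R^{d×m} with QᵀQ = I_m, and let L_C ∈ R^{m×m} satisfy L_C L_Cᵀ = C where C = γ I_m + R Γ Rᵀ is positive definite (R ∈ R^{m×m}, Γ symmetric). Define L = Q(L_C − √γ I_m)Qᵀ + √γ I_d. Then L Lᵀ = γ I_d + Q R Γ Rᵀ Qᵀ. In particular, if U = QR, then L Lᵀ = γ I_d + U Γ Uᵀ. -/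
open Matrix

/-- semi-numerical square root: with `QᵀQ = I_m`,
`C = γ I_m + R Γ Rᵀ` positive definite, `L_C L_Cᵀ = C`, and
`L = Q(L_C − √γ I_m)Qᵀ + √γ I_d`, we have `L Lᵀ = γ I_d + Q R Γ Rᵀ Qᵀ`;
in particular, if `U = QR` then `L Lᵀ = γ I_d + U Γ Uᵀ`. -/
theorem semi_numerical_sqrt
    {d m : ℕ} (γ : ℝ) (hγ : 0 < γ)
    (Q : Matrix (Fin d) (Fin m) ℝ) (hQ : Qᵀ * Q = 1)
    (R : Matrix (Fin m) (Fin m) ℝ) (Γ : Matrix (Fin m) (Fin m) ℝ) (hΓ : Γ.IsSymm)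
    (C : Matrix (Fin m) (Fin m) ℝ)
    (hC : C = γ • (1 : Matrix (Fin m) (Fin m) ℝ) + R * Γ * Rᵀ) (hCpd : C.PosDef)
    (LC : Matrix (Fin m) (Fin m) ℝ) (hLC : LC * LCᵀ = C)
    (L : Matrix (Fin d) (Fin d) ℝ)
    (hL : L = Q * (LC - Real.sqrt γ • (1 : Matrix (Fin m) (Fin m) ℝ)) * Qᵀ
            + Real.sqrt γ • (1 : Matrix (Fin d) (Fin d) ℝ)) :
    L * Lᵀ = γ • (1 : Matrix (Fin d) (Fin d) ℝ) + Q * (R * Γ * Rᵀ) * Qᵀ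
    ∧ ∀ U : Matrix (Fin d) (Fin m) ℝ, U = Q * R →
        L * Lᵀ = γ • (1 : Matrix (Fin d) (Fin d) ℝ) + U * Γ * Uᵀ := by
  have key : L * Lᵀ = γ • (1 : Matrix (Fin d) (Fin d) ℝ) + Q * (R * Γ * Rᵀ) * Qᵀ := by
    have hQ' : ∀ Z : Matrix (Fin m) (Fin d) ℝ, Qᵀ * (Q * Z) = Z := by
      intro Z; rw [← Matrix.mul_assoc, hQ, Matrix.one_mul]
    subst hL hC
    simp only [Matrix.transpose_add, Matrix.transpose_mul, Matrix.transpose_sub,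
      Matrix.transpose_smul, Matrix.transpose_one, Matrix.transpose_transpose,
      Matrix.add_mul, Matrix.mul_add, Matrix.sub_mul, Matrix.mul_sub,
      Matrix.smul_mul, Matrix.mul_smul, Matrix.mul_one, Matrix.one_mul,
      Matrix.mul_assoc, hQ', smul_smul, Real.mul_self_sqrt hγ.le] at *
    rw [← Matrix.mul_assoc LC LCᵀ Qᵀ, hLC]
    simp only [Matrix.mul_add, Matrix.mul_smul, Matrix.smul_mul, Matrix.mul_one,
      smul_add, Matrix.mul_assoc]
    simp only [Matrix.add_mul, Matrix.smul_mul, Matrix.one_mul, Matrix.mul_add,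
      Matrix.mul_smul, smul_smul, Real.mul_self_sqrt hγ.le, Matrix.mul_assoc]
    abel
  refine ⟨key, ?_⟩
  intro U hU
  subst hU
  rw [key]
  simp [Matrix.transpose_mul, Matrix.mul_assoc]
end

section
/- Let B = γ I + U Γ Uᵀ with γ > 0, U ∈ R^{d×m}, Γ ∈ R^{m×m} symmetric, and suppose B is positive definite. Let U = QR be a reduced QR factorization. Then there exists L ∈ R^{d×d} with B = L Lᵀ, namely L = √γ I + Q(L_C − √γ I_m)Qᵀ where L_C is the Cholesky factor of C = γ I_m + R Γ Rᵀ. -/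
/-!
Write `M = L_C - √γ I`, so `L = √γ I + Q M Qᵀ`. Since `QᵀQ = I`, expanding `L Lᵀ` gives
`γ I + Q (L_C L_Cᵀ - γ I) Qᵀ` for every `L_C`, whether triangular or not, and for `L_C L_Cᵀ = C`
this is `γ I + Q R Γ Rᵀ Qᵀ = B`. A factor of `C` exists because `C = Qᵀ B Q` is positive
semidefinite.
-/

open Matrix

section IsometricCompression

variable {n m α : Type*} [Fintype n] [Fintype m] [DecidableEq n] [DecidableEq m] [CommRing α]
  {Q : Matrix n m α}

theorem transpose_mul_smul_one_add_mul_mul_transpose_mul (hQ : Qᵀ * Q = 1) (c : α)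
    (X : Matrix m m α) : Qᵀ * (c • 1 + Q * X * Qᵀ) * Q = c • 1 + X := by
  simp only [Matrix.mul_add, Matrix.add_mul, Matrix.mul_smul, Matrix.smul_mul, Matrix.mul_one,
    hQ, ← Matrix.mul_assoc]
  simp only [Matrix.mul_assoc, hQ, Matrix.mul_one, Matrix.one_mul]

theorem smul_one_add_mul_sub_mul_transpose_mul_transpose (hQ : Qᵀ * Q = 1) (s : α)
    (L : Matrix m m α) :
    (s • 1 + Q * (L - s • 1) * Qᵀ) * (s • 1 + Q * (L - s • 1) * Qᵀ)ᵀ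
      = (s * s) • 1 + Q * (L * Lᵀ - (s * s) • 1) * Qᵀ := by
  set M := L - s • 1
  have hM : L * Lᵀ - (s * s) • 1 = M * Mᵀ + s • M + s • Mᵀ := by
    simp only [M, transpose_sub, transpose_smul, transpose_one, Matrix.sub_mul, Matrix.mul_sub,
      Matrix.smul_mul, Matrix.mul_smul, Matrix.mul_one, Matrix.one_mul, smul_smul, smul_sub]
    abel
  have hQM : Qᵀ * (Q * (Mᵀ * Qᵀ)) = Mᵀ * Qᵀ := by
    rw [← Matrix.mul_assoc, hQ, Matrix.one_mul]
  rw [hM]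
  simp only [transpose_add, transpose_smul, transpose_one, transpose_mul, transpose_transpose,
    Matrix.mul_add, Matrix.add_mul, Matrix.smul_mul, Matrix.mul_smul, Matrix.mul_one,
    Matrix.one_mul, smul_smul, Matrix.mul_assoc, hQM, smul_add]
  abel

end IsometricCompression

theorem Matrix.PosSemidef.exists_mul_transpose_self {n : Type*} [Fintype n] [DecidableEq n]
    {A : Matrix n n ℝ} (hA : A.PosSemidef) : ∃ L : Matrix n n ℝ, L * Lᵀ = A := by
  open scoped MatrixOrder in
  obtain ⟨X, rfl⟩ := CStarAlgebra.nonneg_iff_eq_star_mul_self.mp hA.nonneg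
  exact ⟨Xᵀ, by simp [star_eq_conjTranspose, conjTranspose_eq_transpose_of_trivial]⟩

theorem exists_semi_numerical_sqrt_general
    {d m : ℕ} (γ : ℝ) (hγ : 0 < γ)
    (U : Matrix (Fin d) (Fin m) ℝ) (Γ : Matrix (Fin m) (Fin m) ℝ)
    (B : Matrix (Fin d) (Fin d) ℝ)
    (hB : B = γ • (1 : Matrix (Fin d) (Fin d) ℝ) + U * Γ * Uᵀ) (hBpd : B.PosDef)
    (Q : Matrix (Fin d) (Fin m) ℝ) (R : Matrix (Fin m) (Fin m) ℝ)
    (hQR : U = Q * R) (hQ : Qᵀ * Q = 1) :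
    ∃ LC : Matrix (Fin m) (Fin m) ℝ,
      LC * LCᵀ = γ • (1 : Matrix (Fin m) (Fin m) ℝ) + R * Γ * Rᵀ ∧
      B = (Real.sqrt γ • (1 : Matrix (Fin d) (Fin d) ℝ)
            + Q * (LC - Real.sqrt γ • (1 : Matrix (Fin m) (Fin m) ℝ)) * Qᵀ)
          * (Real.sqrt γ • (1 : Matrix (Fin d) (Fin d) ℝ)
            + Q * (LC - Real.sqrt γ • (1 : Matrix (Fin m) (Fin m) ℝ)) * Qᵀ)ᵀ := by
  have hB' : B = γ • 1 + Q * (R * Γ * Rᵀ) * Qᵀ := by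
    simp only [hB, hQR, transpose_mul, Matrix.mul_assoc]
  have hC : (γ • (1 : Matrix (Fin m) (Fin m) ℝ) + R * Γ * Rᵀ).PosSemidef := by
    rw [← transpose_mul_smul_one_add_mul_mul_transpose_mul hQ, ← hB',
      ← conjTranspose_eq_transpose_of_trivial]
    exact hBpd.posSemidef.conjTranspose_mul_mul_same Q
  obtain ⟨LC, hLC⟩ := hC.exists_mul_transpose_self
  refine ⟨LC, hLC, ?_⟩
  rw [smul_one_add_mul_sub_mul_transpose_mul_transpose hQ, Real.mul_self_sqrt hγ.le, hLC, hB',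
    add_sub_cancel_left]

/-- if `B = γI + UΓUᵀ` is positive definite and `U = QR` is a reduced QR
factorization, then there exists a factor `L_C` with `L_C L_Cᵀ = C = γ I_m + R Γ Rᵀ`
(Cholesky factor) such that `L = √γ I + Q(L_C − √γ I_m)Qᵀ` satisfies `B = L Lᵀ`. -/
theorem exists_semi_numerical_sqrt
    {d m : ℕ} (γ : ℝ) (hγ : 0 < γ)
    (U : Matrix (Fin d) (Fin m) ℝ) (Γ : Matrix (Fin m) (Fin m) ℝ) (hΓ : Γ.IsSymm)
    (B : Matrix (Fin d) (Fin d) ℝ)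
    (hB : B = γ • (1 : Matrix (Fin d) (Fin d) ℝ) + U * Γ * Uᵀ) (hBpd : B.PosDef)
    (Q : Matrix (Fin d) (Fin m) ℝ) (R : Matrix (Fin m) (Fin m) ℝ)
    (hQR : U = Q * R) (hQ : Qᵀ * Q = 1) (hR : R.BlockTriangular id) :
    ∃ LC : Matrix (Fin m) (Fin m) ℝ,
      LC * LCᵀ = γ • (1 : Matrix (Fin m) (Fin m) ℝ) + R * Γ * Rᵀ ∧
      B = (Real.sqrt γ • (1 : Matrix (Fin d) (Fin d) ℝ)
            + Q * (LC - Real.sqrt γ • (1 : Matrix (Fin m) (Fin m) ℝ)) * Qᵀ)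
          * (Real.sqrt γ • (1 : Matrix (Fin d) (Fin d) ℝ)
            + Q * (LC - Real.sqrt γ • (1 : Matrix (Fin m) (Fin m) ℝ)) * Qᵀ)ᵀ :=
  exists_semi_numerical_sqrt_general γ hγ U Γ B hB hBpd Q R hQR hQ
end
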